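/- arXiv:1511.01137 — 3 statements merged into one kernel-verified Lean document; each statement's English description precedes it below -/
import Mathlib

section
/- Let T be a tournament on seven distinct vertices z, u1, u2, u3, v1, v2, v3 such that ui→z for i=1,2,3, z→vi for i=1,2,3, vi→ui for i=1,2,3, and ui→vj whenever i≠j (the arcs among {u1,u2,u3} and among {v1,v2,v3} are arbitrary). Then T contains no transitive subtournament on 5 vertices; equivalently, every feedback vertex set of T has size at least 3. -/
/-- A tournament on vertex set `V`: an irreflexive relation such that for
all distinct `u, v` exactly one of `u→v` and `v→u` holds. -/
def IsTournament {V : Type*} (r : V → V → Prop) : Prop :=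
  (∀ v, ¬ r v v) ∧ ∀ u v : V, u ≠ v → (r u v ↔ ¬ r v u)

/-- The subtournament induced on `A` contains a directed cycle. -/
def HasCycleIn {V : Type*} (r : V → V → Prop) (A : Set V) : Prop :=
  ∃ (n : ℕ) (f : Fin (n + 1) → V), Function.Injective f ∧ (∀ i, f i ∈ A) ∧
    (∀ i : Fin n, r (f i.castSucc) (f i.succ)) ∧ r (f (Fin.last n)) (f 0)

/-- `S` is a feedback vertex set: the subtournament induced on the complement of `S`
contains no directed cycle. -/
def IsFVS {V : Type*} (r : V → V → Prop) (S : Set V) : Prop :=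
  ¬ HasCycleIn r Sᶜ

/-- The restriction of `r` to the vertex set `X` is a transitive relation. -/
def TransOn {V : Type*} (r : V → V → Prop) (X : Finset V) : Prop :=
  ∀ x ∈ X, ∀ y ∈ X, ∀ z ∈ X, r x y → r y z → r x z

/-!
Split the seven vertices into the blocks `{z}`, `{u1, v1}`, `{u2, v2}`, `{u3, v3}`. Any two
blocks span a directed cycle: `ui → z → vi → ui`, or `vi → ui → vj → uj → vi` for `i ≠ j`.
So a transitive set contains at most one block, hence misses a vertex from each of three
disjoint blocks and has at most four vertices. A set that is not transitive contains a
directed triangle, so the complement of a feedback vertex set is transitive and has at most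
four vertices.
-/

open Finset Function

theorem IsTournament.asymm {V : Type*} {r : V → V → Prop} (hT : IsTournament r) ⦃a b : V⦄
    (hab : r a b) : ¬ r b a := by
  rcases eq_or_ne b a with rfl | hne
  · exact hT.1 b
  · exact fun hba => (hT.2 b a hne).1 hba hab

theorem Finset.card_sub_one_le_card_compl_of_subsingleton {ι V : Type*} [Fintype ι] [Fintype V]
    [DecidableEq V] (B : ι → Finset V) (hB : Pairwise (Disjoint on B)) (X : Finset V)
    (hX : {i | B i ⊆ X}.Subsingleton) : Fintype.card ι - 1 ≤ #Xᶜ := by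
  have hin : #{i | B i ⊆ X} ≤ 1 :=
    card_le_one.2 fun i hi j hj => hX (by simpa using hi) (by simpa using hj)
  have hsplit := card_filter_add_card_filter_not (s := univ) (fun i => B i ⊆ X)
  rw [card_univ] at hsplit
  set I : Finset ι := {i | ¬ B i ⊆ X}
  calc Fintype.card ι - 1 ≤ #I := by omega
    _ ≤ #(I.biUnion fun i => B i \ X) :=
      card_le_card_biUnion (fun i _ j _ hij => (hB hij).mono sdiff_le sdiff_le)
        fun i hi => sdiff_nonempty.2 (by simpa [I] using hi)
    _ ≤ #Xᶜ := card_le_card <| biUnion_subset.2 fun i _ a ha => by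
      simpa using (mem_sdiff.1 ha).2

section
variable {V : Type*} {r : V → V → Prop}

theorem TransOn.mono {X Y : Finset V} (hX : TransOn r X) (hYX : Y ⊆ X) : TransOn r Y :=
  fun x hx y hy z hz => hX x (hYX hx) y (hYX hy) z (hYX hz)

theorem TransOn.not_rel_of_rel_rel (hr : ∀ ⦃a b⦄, r a b → ¬ r b a) {X : Finset V}
    (hX : TransOn r X) {a b c : V} (ha : a ∈ X) (hb : b ∈ X) (hc : c ∈ X)
    (hab : r a b) (hbc : r b c) : ¬ r c a :=
  hr (hX a ha b hb c hc hab hbc)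

theorem TransOn.not_rel_of_rel_rel_rel (hr : ∀ ⦃a b⦄, r a b → ¬ r b a) {X : Finset V}
    (hX : TransOn r X) {a b c d : V} (ha : a ∈ X) (hb : b ∈ X) (hc : c ∈ X) (hd : d ∈ X)
    (hab : r a b) (hbc : r b c) (hcd : r c d) : ¬ r d a :=
  fun hda => hX.not_rel_of_rel_rel hr hc hd ha hcd hda (hX a ha b hb c hc hab hbc)

theorem hasCycleIn_of_rel_rel_rel {A : Set V} {a b c : V} (ha : a ∈ A) (hb : b ∈ A) (hc : c ∈ A)
    (hne_ab : a ≠ b) (hne_ac : a ≠ c) (hne_bc : b ≠ c) (hab : r a b) (hbc : r b c) (hca : r c a) :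
    HasCycleIn r A := by
  refine ⟨2, ![a, b, c], ?_, ?_, ?_, hca⟩
  · intro i j hij
    fin_cases i <;> fin_cases j <;> simp_all [eq_comm]
  · intro i
    fin_cases i <;> assumption
  · intro i
    fin_cases i <;> assumption

theorem IsTournament.transOn_of_not_hasCycleIn (hT : IsTournament r) {X : Finset V}
    (hX : ¬ HasCycleIn r ↑X) : TransOn r X := by
  intro x hx y hy w hw hxy hyw
  have hxw : x ≠ w := by
    rintro rfl
    exact hT.asymm hxy hyw
  by_contra hnxw
  refine hX (hasCycleIn_of_rel_rel_rel hx hy hw ?_ hxw ?_ hxy hyw ?_)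
  · rintro rfl; exact hT.1 x hxy
  · rintro rfl; exact hT.1 y hyw
  · exact not_not.1 (mt (hT.2 x w hxw).2 hnxw)

theorem IsTournament.card_lt_card_add_of_isFVS [Fintype V] [DecidableEq V] (hT : IsTournament r)
    {k : ℕ} (hk : ∀ X : Finset V, #X = k → ¬ TransOn r X) {S : Finset V} (hS : IsFVS r ↑S) :
    Fintype.card V < #S + k := by
  by_contra! h
  obtain ⟨X, hXS, hXk⟩ := exists_subset_card_eq (s := Sᶜ) (n := k) (by rw [card_compl]; omega)
  exact hk X hXk ((hT.transOn_of_not_hasCycleIn (by rwa [coe_compl])).mono hXS)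

end

theorem not_transOn_of_card_eq_five {V : Type*} [Fintype V] [DecidableEq V]
    {r : V → V → Prop} (hT : IsTournament r) {z u1 u2 u3 v1 v2 v3 : V}
    (hcard : #{z, u1, u2, u3, v1, v2, v3} = 7) (hV : Fintype.card V = 7)
    (huz : r u1 z ∧ r u2 z ∧ r u3 z)
    (hzv : r z v1 ∧ r z v2 ∧ r z v3)
    (hvu : r v1 u1 ∧ r v2 u2 ∧ r v3 u3)
    (huv : r u1 v2 ∧ r u1 v3 ∧ r u2 v1 ∧ r u2 v3 ∧ r u3 v1 ∧ r u3 v2)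
    {X : Finset V} (hX : #X = 5) : ¬ TransOn r X := by
  intro hXt
  have hnd : [z, u1, u2, u3, v1, v2, v3].Nodup := by
    rw [← Multiset.coe_nodup, ← Multiset.toFinset_card_eq_card_iff_nodup]
    simpa using hcard
  simp only [List.nodup_cons, List.mem_cons, List.not_mem_nil, or_false, not_or] at hnd
  let B : Fin 4 → Finset V := ![{z}, {u1, v1}, {u2, v2}, {u3, v3}]
  have hB : Pairwise (Disjoint on B) := by
    intro i j hij
    fin_cases i <;> fin_cases j <;> simp_all [B, onFun, eq_comm]
  have hzk {u v : V} (huz : r u z) (hzv : r z v) (hvu : r v u) : ¬ (u ∈ X ∧ v ∈ X ∧ z ∈ X) :=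
    fun ⟨hu, hv, hz⟩ => hXt.not_rel_of_rel_rel hT.asymm hu hz hv huz hzv hvu
  have hjk {u v u' v' : V} (h₁ : r v u) (h₂ : r u v') (h₃ : r v' u') (h₄ : r u' v) :
      ¬ (u ∈ X ∧ v ∈ X ∧ u' ∈ X ∧ v' ∈ X) :=
    fun ⟨hu, hv, hu', hv'⟩ => hXt.not_rel_of_rel_rel_rel hT.asymm hv hu hv' hu' h₁ h₂ h₃ h₄
  have hz₁ := hzk huz.1 hzv.1 hvu.1
  have hz₂ := hzk huz.2.1 hzv.2.1 hvu.2.1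
  have hz₃ := hzk huz.2.2 hzv.2.2 hvu.2.2
  have h₁₂ := hjk hvu.1 huv.1 hvu.2.1 huv.2.2.1
  have h₁₃ := hjk hvu.1 huv.2.1 hvu.2.2 huv.2.2.2.2.1
  have h₂₃ := hjk hvu.2.1 huv.2.2.2.1 hvu.2.2 huv.2.2.2.2.2
  have hXB : {i | B i ⊆ X}.Subsingleton := by
    intro i hi j hj
    fin_cases i <;> fin_cases j <;>
      simp only [B, Set.mem_ofPred_eq, Fin.reduceFinMk, Fin.zero_eta, Fin.mk_one, Fin.isValue,
        Matrix.cons_val, Matrix.cons_val_zero, Matrix.cons_val_one, insert_subset_iff,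
        singleton_subset_iff] at hi hj ⊢ <;>
      simp_all
  have h3 := card_sub_one_le_card_compl_of_subsingleton B hB X hXB
  rw [card_compl, hV, hX, Fintype.card_fin] at h3
  omega

/-- a tournament on seven distinct vertices `z, u1, u2, u3, v1, v2, v3`
with `ui→z`, `z→vi`, `vi→ui` and `ui→vj` for `i≠j` (remaining arcs arbitrary)
contains no transitive subtournament on 5 vertices; equivalently, every feedback
vertex set has size at least 3. -/
theorem stmt1 {V : Type*} [Fintype V] [DecidableEq V]
    (r : V → V → Prop) (hT : IsTournament r)
    (z u1 u2 u3 v1 v2 v3 : V)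
    (hcard : ({z, u1, u2, u3, v1, v2, v3} : Finset V).card = 7)
    (huniv : (Finset.univ : Finset V) = {z, u1, u2, u3, v1, v2, v3})
    (huz : r u1 z ∧ r u2 z ∧ r u3 z)
    (hzv : r z v1 ∧ r z v2 ∧ r z v3)
    (hvu : r v1 u1 ∧ r v2 u2 ∧ r v3 u3)
    (huv : r u1 v2 ∧ r u1 v3 ∧ r u2 v1 ∧ r u2 v3 ∧ r u3 v1 ∧ r u3 v2) :
    (∀ X : Finset V, X.card = 5 → ¬ TransOn r X) ∧
    (∀ S : Finset V, IsFVS r (↑S : Set V) → 3 ≤ S.card) := by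
  have hV : Fintype.card V = 7 := by rw [← card_univ, huniv, hcard]
  have hX : ∀ X : Finset V, #X = 5 → ¬ TransOn r X := fun X hX =>
    not_transOn_of_card_eq_five hT hcard hV huz hzv hvu huv hX
  exact ⟨hX, fun S hS => by have := hT.card_lt_card_add_of_isFVS hX hS; omega⟩
end

section
/- Let T be a tournament with vertex set V and weight function w : V → ℝ with w ≥ 0, and let x* be an optimal solution to the LP relaxation (LP) for T. Let S = {v ∈ V : x*_v ≥ 3/7}. Then OPT(T−S) + (3/7)·w(S) ≤ OPT(T), where T−S denotes the subtournament induced on V∖S. -/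
/-- Feasibility for the LP relaxation (LP) of the FVS problem on the subtournament
induced on `A`: `x ≥ 0`, every directed triangle inside `A` is covered to value at
least `1`, and every 7-element subset of `A` with no 5-element transitive subset is
covered to value at least `3`. -/
def LPFeasibleOn {V : Type*} [Fintype V] [DecidableEq V]
    (r : V → V → Prop) (A : Finset V) (x : V → ℝ) : Prop :=
  (∀ v, 0 ≤ x v) ∧
  (∀ u ∈ A, ∀ v ∈ A, ∀ w ∈ A, r u v → r v w → r w u → 1 ≤ x u + x v + x w) ∧
  (∀ Q ⊆ A, Q.card = 7 →
    (¬ ∃ X ⊆ Q, X.card = 5 ∧ TransOn r X) → 3 ≤ ∑ v ∈ Q, x v)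

/-- `OPT` of the LP relaxation on the subtournament induced on `A`. -/
noncomputable def LPoptOn {V : Type*} [Fintype V] [DecidableEq V]
    (r : V → V → Prop) (w : V → ℝ) (A : Finset V) : ℝ :=
  sInf {c : ℝ | ∃ x : V → ℝ, LPFeasibleOn r A x ∧ c = ∑ v ∈ A, w v * x v}

section LP

open Finset

variable {V : Type*} [Fintype V] [DecidableEq V] {r : V → V → Prop}

theorem LPFeasibleOn.mono {A B : Finset V} {x : V → ℝ} (hx : LPFeasibleOn r A x)
    (hBA : B ⊆ A) : LPFeasibleOn r B x := by
  obtain ⟨hx0, htri, hseven⟩ := hx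
  refine ⟨hx0, fun u hu v hv t ht => htri u (hBA hu) v (hBA hv) t (hBA ht), ?_⟩
  exact fun Q hQ => hseven Q (hQ.trans hBA)

theorem LPoptOn_le_of_feasible {w : V → ℝ} (hw : ∀ v, 0 ≤ w v) {A : Finset V} {x : V → ℝ}
    (hx : LPFeasibleOn r A x) : LPoptOn r w A ≤ ∑ v ∈ A, w v * x v := by
  have hbdd : BddBelow {c : ℝ | ∃ y : V → ℝ,
      LPFeasibleOn r A y ∧ c = ∑ v ∈ A, w v * y v} := by
    refine ⟨0, ?_⟩
    rintro c ⟨y, hy, rfl⟩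
    exact sum_nonneg fun v _ => mul_nonneg (hw v) (hy.1 v)
  exact csInf_le hbdd ⟨x, hx, rfl⟩

end LP

theorem stmt3_general {V : Type*} [Fintype V] [DecidableEq V]
    (r : V → V → Prop)
    (w : V → ℝ) (hw : ∀ v, 0 ≤ w v)
    (xs : V → ℝ) (hfeas : LPFeasibleOn r Finset.univ xs)
    (hopt : ∑ v, w v * xs v = LPoptOn r w Finset.univ)
    (S : Finset V) (hS : (↑S : Set V) = {v : V | 3 / 7 ≤ xs v}) :
    LPoptOn r w (Finset.univ \ S) + 3 / 7 * ∑ v ∈ S, w v ≤ LPoptOn r w Finset.univ := by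
  have hxs_ge : ∀ v ∈ S, 3 / 7 ≤ xs v := fun v hv => (Set.ext_iff.mp hS v).mp hv
  have hS_bound : 3 / 7 * ∑ v ∈ S, w v ≤ ∑ v ∈ S, w v * xs v := by
    rw [Finset.mul_sum]
    exact Finset.sum_le_sum fun v hv => by nlinarith [hw v, hxs_ge v hv]
  calc LPoptOn r w (Finset.univ \ S) + 3 / 7 * ∑ v ∈ S, w v
      ≤ ∑ v ∈ Finset.univ \ S, w v * xs v + ∑ v ∈ S, w v * xs v :=
        add_le_add (LPoptOn_le_of_feasible hw (hfeas.mono (Finset.subset_univ _))) hS_bound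
    _ = LPoptOn r w Finset.univ := by rw [Finset.sum_sdiff (Finset.subset_univ S), hopt]

/-- if `x*` is an optimal solution to the LP relaxation for `T` and
`S = {v : x*_v ≥ 3/7}`, then `OPT(T−S) + (3/7)·w(S) ≤ OPT(T)`. -/
theorem stmt3 {V : Type*} [Fintype V] [DecidableEq V]
    (r : V → V → Prop) (hT : IsTournament r)
    (w : V → ℝ) (hw : ∀ v, 0 ≤ w v)
    (xs : V → ℝ) (hfeas : LPFeasibleOn r Finset.univ xs)
    (hopt : ∑ v, w v * xs v = LPoptOn r w Finset.univ)
    (S : Finset V) (hS : (↑S : Set V) = {v : V | 3 / 7 ≤ xs v}) :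
    LPoptOn r w (Finset.univ \ S) + 3 / 7 * ∑ v ∈ S, w v ≤ LPoptOn r w Finset.univ :=
  stmt3_general r w hw xs hfeas hopt S hS
end

section
/- Let T be a tournament with vertex set V and weight function w : V → ℝ with w ≥ 0, such that V is nonempty, every vertex of T is contained in some directed triangle, and the triangle-covering LP of T has an optimal solution x* with x*_v ≤ 3/7 for every v ∈ V. Then the optimum value of the triangle-covering LP equals (1/3)·w(V), where w(V) = ∑_{v∈V} w_v. -/
/-- Feasibility for the triangle-covering LP: `x ≥ 0` and every directed triangle
is covered to value at least `1`. -/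
def TriLPFeasible {V : Type*} (r : V → V → Prop) (x : V → ℝ) : Prop :=
  (∀ v, 0 ≤ x v) ∧
  (∀ u v w : V, r u v → r v w → r w u → 1 ≤ x u + x v + x w)

open Finset

section TriLP

variable {V : Type*} {r : V → V → Prop}

theorem triLPFeasible_const {c : ℝ} (hc : 1 / 3 ≤ c) : TriLPFeasible r fun _ => c :=
  ⟨fun _ => by linarith, fun _ _ _ _ _ _ => by linarith⟩

theorem TriLPFeasible.sub_div {x : V → ℝ} (hx : TriLPFeasible r x) {t : ℝ} (ht : t < 1 / 3)
    (hxt : ∀ v, t ≤ x v) : TriLPFeasible r fun v => (x v - t) / (1 - 3 * t) := by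
  have hpos : 0 < 1 - 3 * t := by linarith
  refine ⟨fun v => div_nonneg (sub_nonneg.2 (hxt v)) hpos.le, fun u v w huv hvw hwu => ?_⟩
  rw [← add_div, ← add_div, le_div_iff₀ hpos]
  linarith [hx.2 u v w huv hvw hwu]

theorem TriLPFeasible.le_of_mem_triangle {x : V → ℝ} (hx : TriLPFeasible r x) {b : ℝ}
    (hb : ∀ v, x v ≤ b) {v u u' : V} (h₁ : r v u) (h₂ : r u u') (h₃ : r u' v) :
    1 - 2 * b ≤ x v := by
  linarith [hx.2 v u u' h₁ h₂ h₃, hb u, hb u']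

variable [Fintype V]

theorem triLP_objective_le_third (w : V → ℝ) {xs : V → ℝ}
    (hopt : ∀ x : V → ℝ, TriLPFeasible r x → ∑ v, w v * xs v ≤ ∑ v, w v * x v) :
    ∑ v, w v * xs v ≤ 1 / 3 * ∑ v, w v := by
  calc ∑ v, w v * xs v ≤ ∑ v, w v * (1 / 3) := hopt _ (triLPFeasible_const le_rfl)
    _ = 1 / 3 * ∑ v, w v := by rw [← sum_mul, mul_comm]

theorem triLP_objective_eq_third_of_le (w : V → ℝ) {xs : V → ℝ} (hfeas : TriLPFeasible r xs)
    (hopt : ∀ x : V → ℝ, TriLPFeasible r x → ∑ v, w v * xs v ≤ ∑ v, w v * x v)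
    {t : ℝ} (ht₀ : 0 < t) (ht : t < 1 / 3) (hxt : ∀ v, t ≤ xs v) :
    ∑ v, w v * xs v = 1 / 3 * ∑ v, w v := by
  have hpos : 0 < 1 - 3 * t := by linarith
  have hshift := hopt _ (hfeas.sub_div ht hxt)
  have hsum : ∑ v, w v * ((xs v - t) / (1 - 3 * t))
      = (∑ v, w v * xs v - t * ∑ v, w v) / (1 - 3 * t) := by
    rw [mul_sum, ← sum_sub_distrib, sum_div]
    exact sum_congr rfl fun v _ => by ring
  rw [hsum, le_div_iff₀ hpos] at hshift
  have hlow : t * ∑ v, w v ≤ t * (3 * ∑ v, w v * xs v) := by linarith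
  have hge : ∑ v, w v ≤ 3 * ∑ v, w v * xs v := le_of_mul_le_mul_left hlow ht₀
  linarith [triLP_objective_le_third w hopt]

end TriLP

theorem stmt5_general {V : Type*} [Fintype V]
    (r : V → V → Prop)
    (w : V → ℝ)
    (hcov : ∀ v : V, ∃ u u' : V, r v u ∧ r u u' ∧ r u' v)
    (xs : V → ℝ) (hfeas : TriLPFeasible r xs)
    (hopt : ∀ x : V → ℝ, TriLPFeasible r x → ∑ v, w v * xs v ≤ ∑ v, w v * x v)
    (hb : ∀ v, xs v ≤ 3 / 7) :
    ∑ v, w v * xs v = 1 / 3 * ∑ v, w v := by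
  have hlow : ∀ v, 1 / 7 ≤ xs v := fun v => by
    obtain ⟨u, u', h₁, h₂, h₃⟩ := hcov v
    linarith [hfeas.le_of_mem_triangle hb h₁ h₂ h₃]
  exact triLP_objective_eq_third_of_le w hfeas hopt (by norm_num) (by norm_num) hlow

/-- if `V` is nonempty, every vertex lies in a directed triangle, and the
triangle-covering LP has an optimal solution `x*` with `x*_v ≤ 3/7` for all `v`, then
the optimum value of the triangle-covering LP equals `(1/3)·w(V)`. -/
theorem stmt5 {V : Type*} [Fintype V] [Nonempty V]
    (r : V → V → Prop) (hT : IsTournament r)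
    (w : V → ℝ) (hw : ∀ v, 0 ≤ w v)
    (hcov : ∀ v : V, ∃ u u' : V, r v u ∧ r u u' ∧ r u' v)
    (xs : V → ℝ) (hfeas : TriLPFeasible r xs)
    (hopt : ∀ x : V → ℝ, TriLPFeasible r x → ∑ v, w v * xs v ≤ ∑ v, w v * x v)
    (hb : ∀ v, xs v ≤ 3 / 7) :
    ∑ v, w v * xs v = 1 / 3 * ∑ v, w v :=
  stmt5_general r w hcov xs hfeas hopt hb
end
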